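/- If m + ω > 0 and m is continuous and integrable with m + ω Schwartz-class positive, then along the CH flow (m_t + u m_x + 2u_x m + 2ω u_x = 0 with smooth solution and diffeomorphism flow g with ġ = u∘g), the quantity (m(g(x,t),t)+ω) gₓ(x,t)² equals m(x,0)+ω; in particular positivity of m+ω is preserved in time. -/

import Mathlib

noncomputable def pX (f : ℝ → ℝ → ℝ) (x t : ℝ) : ℝ := deriv (fun y => f y t) x
noncomputable def pT (f : ℝ → ℝ → ℝ) (x t : ℝ) : ℝ := deriv (fun s => f x s) t

section aux
variable {f : ℝ → ℝ → ℝ}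

lemma hasDerivAt_pX (hf : ContDiff ℝ (⊤ : ℕ∞) (fun p : ℝ × ℝ => f p.1 p.2)) (x t : ℝ) :
    HasDerivAt (fun y => f y t) (fderiv ℝ (fun p : ℝ × ℝ => f p.1 p.2) (x, t) (1, 0)) x := by
  have h1 : HasDerivAt (fun y : ℝ => (y, t)) ((1 : ℝ), (0 : ℝ)) x :=
    (hasDerivAt_id x).prodMk (hasDerivAt_const x t)
  exact ((hf.differentiable (by simp) (x, t)).hasFDerivAt).comp_hasDerivAt x h1

lemma hasDerivAt_pT (hf : ContDiff ℝ (⊤ : ℕ∞) (fun p : ℝ × ℝ => f p.1 p.2)) (x t : ℝ) :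
    HasDerivAt (fun s => f x s) (fderiv ℝ (fun p : ℝ × ℝ => f p.1 p.2) (x, t) (0, 1)) t := by
  have h1 : HasDerivAt (fun s : ℝ => (x, s)) ((0 : ℝ), (1 : ℝ)) t :=
    (hasDerivAt_const t x).prodMk (hasDerivAt_id t)
  exact ((hf.differentiable (by simp) (x, t)).hasFDerivAt).comp_hasDerivAt t h1

lemma pX_eq (hf : ContDiff ℝ (⊤ : ℕ∞) (fun p : ℝ × ℝ => f p.1 p.2)) (x t : ℝ) :
    pX f x t = fderiv ℝ (fun p : ℝ × ℝ => f p.1 p.2) (x, t) (1, 0) :=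
  (hasDerivAt_pX hf x t).deriv

lemma pT_eq (hf : ContDiff ℝ (⊤ : ℕ∞) (fun p : ℝ × ℝ => f p.1 p.2)) (x t : ℝ) :
    pT f x t = fderiv ℝ (fun p : ℝ × ℝ => f p.1 p.2) (x, t) (0, 1) :=
  (hasDerivAt_pT hf x t).deriv

lemma pX_smooth (hf : ContDiff ℝ (⊤ : ℕ∞) (fun p : ℝ × ℝ => f p.1 p.2)) :
    ContDiff ℝ (⊤ : ℕ∞) (fun p : ℝ × ℝ => pX f p.1 p.2) := by
  have h : (fun p : ℝ × ℝ => pX f p.1 p.2)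
      = fun p : ℝ × ℝ => fderiv ℝ (fun q : ℝ × ℝ => f q.1 q.2) p (1, 0) := by
    funext p
    exact pX_eq hf p.1 p.2
  rw [h]
  exact (ContinuousLinearMap.apply ℝ ℝ ((1:ℝ), (0:ℝ))).contDiff.comp
    (hf.fderiv_right (by simp))
end aux

theorem CH_positivity_preserved
    (ω : ℝ) (u m g : ℝ → ℝ → ℝ)
    (hu : ContDiff ℝ (⊤ : ℕ∞) (fun p : ℝ × ℝ => u p.1 p.2))
    (hgsm : ContDiff ℝ (⊤ : ℕ∞) (fun p : ℝ × ℝ => g p.1 p.2))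
    (hm : ∀ x t, m x t = u x t - pX (pX u) x t)
    (hCH : ∀ x t, pT m x t + u x t * pX m x t
        + 2 * pX u x t * m x t + 2 * ω * pX u x t = 0)
    (hflow : ∀ x t, pT g x t = u (g x t) t)
    (hg0 : ∀ x, g x 0 = x)
    (hgx : ∀ x t, 0 < pX g x t)
    (hbij : ∀ t, Function.Bijective (fun x => g x t)) :
    (∀ x t, deriv (fun s => (m (g x s) s + ω) * (pX g x s) ^ 2) t = 0) ∧
    (∀ x t, (m (g x t) t + ω) * (pX g x t) ^ 2 = m x 0 + ω) ∧
    ((∀ x, 0 < m x 0 + ω) → ∀ x t, 0 < m x t + ω) := by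
  -- smoothness of m
  have hmsm : ContDiff ℝ (⊤ : ℕ∞) (fun p : ℝ × ℝ => m p.1 p.2) := by
    have : (fun p : ℝ × ℝ => m p.1 p.2)
        = fun p : ℝ × ℝ => u p.1 p.2 - pX (pX u) p.1 p.2 := by
      funext p; exact hm p.1 p.2
    rw [this]
    exact hu.sub (pX_smooth (pX_smooth hu))
  set G : ℝ × ℝ → ℝ := fun p => g p.1 p.2 with hG
  set G' := fderiv ℝ G with hG'
  have hG'sm : ContDiff ℝ (⊤ : ℕ∞) G' := hgsm.fderiv_right (by simp)
  -- time derivative of g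
  have hgT : ∀ x s, HasDerivAt (fun s => g x s) (u (g x s) s) s := by
    intro x s
    have h := hasDerivAt_pT hgsm x s
    rw [← pT_eq hgsm, hflow] at h
    exact h
  -- space derivative of g
  have hgX : ∀ x s, HasDerivAt (fun y => g y s) (pX g x s) x := by
    intro x s
    have h := hasDerivAt_pX hgsm x s
    rw [← pX_eq hgsm] at h
    exact h
  -- time derivative of pX g
  have hψ : ∀ x s, HasDerivAt (fun s => pX g x s) (pX u (g x s) s * pX g x s) s := by
    intro x s
    -- the curve s ↦ G' (x,s) and its derivative
    have hc : HasDerivAt (fun s => G' (x, s)) (fderiv ℝ G' (x, s) (0, 1)) s := by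
      have h1 : HasDerivAt (fun s : ℝ => (x, s)) ((0 : ℝ), (1 : ℝ)) s :=
        (hasDerivAt_const s x).prodMk (hasDerivAt_id s)
      exact ((hG'sm.differentiable (by simp) (x, s)).hasFDerivAt).comp_hasDerivAt s h1
    have h2 : HasDerivAt (fun s => G' (x, s) (1, 0)) (fderiv ℝ G' (x, s) (0, 1) (1, 0)) s := by
      have := hc.clm_apply (hasDerivAt_const s ((1 : ℝ), (0 : ℝ)))
      simpa using this
    -- rewrite the function as pX g
    have hfun : (fun s => G' (x, s) ((1 : ℝ), (0 : ℝ))) = fun s => pX g x s := by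
      funext s; exact (pX_eq hgsm x s).symm
    rw [hfun] at h2
    -- symmetry of second derivative
    have hsymm : fderiv ℝ G' (x, s) ((0:ℝ), (1:ℝ)) ((1:ℝ), (0:ℝ))
        = fderiv ℝ G' (x, s) ((1:ℝ), (0:ℝ)) ((0:ℝ), (1:ℝ)) := by
      exact second_derivative_symmetric
        (fun y => (hgsm.differentiable (by simp) y).hasFDerivAt)
        ((hG'sm.differentiable (by simp) (x, s)).hasFDerivAt) _ _
    -- identify the mixed derivative with pX u (g) * pX g
    have hmix : fderiv ℝ G' (x, s) ((1:ℝ), (0:ℝ)) ((0:ℝ), (1:ℝ))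
        = pX u (g x s) s * pX g x s := by
      -- left side is the derivative at x of y ↦ G' (y, s) (0,1) = pT g y s = u (g y s) s
      have hc2 : HasDerivAt (fun y => G' (y, s)) (fderiv ℝ G' (x, s) (1, 0)) x := by
        have h1 : HasDerivAt (fun y : ℝ => (y, s)) ((1 : ℝ), (0 : ℝ)) x :=
          (hasDerivAt_id x).prodMk (hasDerivAt_const x s)
        exact ((hG'sm.differentiable (by simp) (x, s)).hasFDerivAt).comp_hasDerivAt x h1
      have h3 : HasDerivAt (fun y => G' (y, s) ((0:ℝ), (1:ℝ)))
          (fderiv ℝ G' (x, s) ((1:ℝ), (0:ℝ)) ((0:ℝ), (1:ℝ))) x := by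
        have := hc2.clm_apply (hasDerivAt_const x ((0 : ℝ), (1 : ℝ)))
        simpa using this
      have hfun2 : (fun y => G' (y, s) ((0:ℝ), (1:ℝ))) = fun y => u (g y s) s := by
        funext y
        rw [← pT_eq hgsm y s, hflow]
      rw [hfun2] at h3
      -- compute the derivative of y ↦ u (g y s) s by the chain rule
      have h4 : HasDerivAt (fun y => u (g y s) s) (pX u (g x s) s * pX g x s) x := by
        have hinner : HasDerivAt (fun y : ℝ => (g y s, s)) ((pX g x s, (0:ℝ))) x :=
          (hgX x s).prodMk (hasDerivAt_const x s)
        have h5 := ((hu.differentiable (by simp) (g x s, s)).hasFDerivAt).comp_hasDerivAt x hinner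
        have hv : ((pX g x s, (0:ℝ)) : ℝ × ℝ) = (pX g x s) • ((1:ℝ), (0:ℝ)) := by
          simp
        rw [hv, map_smul] at h5
        rw [pX_eq hu]
        simpa [smul_eq_mul, mul_comm, Function.comp_def] using h5
      exact h3.unique h4
    rw [hsymm, hmix] at h2
    exact h2
  -- time derivative of m(g x s, s)
  have hφ : ∀ x s, HasDerivAt (fun s => m (g x s) s)
      (pX m (g x s) s * u (g x s) s + pT m (g x s) s) s := by
    intro x s
    have hinner : HasDerivAt (fun s : ℝ => (g x s, s)) ((u (g x s) s, (1:ℝ))) s :=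
      (hgT x s).prodMk (hasDerivAt_id s)
    have h5 := HasFDerivAt.comp_hasDerivAt (f := fun s : ℝ => (g x s, s)) s
      ((hmsm.differentiable (by simp) (g x s, s)).hasFDerivAt) hinner
    have hv : ((u (g x s) s, (1:ℝ)) : ℝ × ℝ)
        = (u (g x s) s) • ((1:ℝ), (0:ℝ)) + ((0:ℝ), (1:ℝ)) := by simp
    rw [hv, map_add, map_smul] at h5
    rw [pX_eq hmsm, pT_eq hmsm]
    simpa [smul_eq_mul, mul_comm, Function.comp_def] using h5
  -- the energy has zero derivative
  have hE : ∀ x s, HasDerivAt (fun s => (m (g x s) s + ω) * (pX g x s) ^ 2) 0 s := by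
    intro x s
    have h := ((hφ x s).add_const ω).mul ((hψ x s).pow 2)
    refine h.congr_deriv ?_
    have hc := hCH (g x s) s
    push_cast
    simp only [Pi.pow_apply]
    linear_combination ((pX g x s) ^ 2) * hc
  have part2 : ∀ x t, (m (g x t) t + ω) * (pX g x t) ^ 2 = m x 0 + ω := by
    intro x t
    have hconst : ∀ s₁ s₂ : ℝ, (m (g x s₁) s₁ + ω) * (pX g x s₁) ^ 2
        = (m (g x s₂) s₂ + ω) * (pX g x s₂) ^ 2 :=
      is_const_of_deriv_eq_zero (fun s => (hE x s).differentiableAt)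
        (fun s => (hE x s).deriv)
    have h0 : pX g x 0 = 1 := by
      have : (fun y => g y 0) = fun y => y := funext hg0
      rw [pX, this]
      exact deriv_id x
    have := hconst t 0
    rw [h0, hg0] at this
    simpa using this
  refine ⟨fun x t => (hE x t).deriv, part2, ?_⟩
  intro hpos x t
  obtain ⟨y, hy⟩ := (hbij t).2 x
  simp only at hy
  have h2 := part2 y t
  rw [hy] at h2
  nlinarith [hgx y t, hpos y, h2]
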